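/- Let F_n be the empirical cdf of n i.i.d. samples from continuous cdf F and let F̂_h be the kernel-smoothed cdf with bandwidth h_n = a n^{−1/5}, a > 0, based on a symmetric compactly supported kernel. Fix x with f'(x) ≠ 0 and f twice continuously differentiable near x. Then for every c > 0, P(√n |F̂_{h_n}(x) − F_n(x)| ≤ c) → 0 as n → ∞. -/

import Mathlib

/-!
Write `√n (F̂_h(x) - F_n(x)) = n^(-1/2) ∑ Yᵢ` with `Yᵢ = K((x - Xᵢ)/h) - 1{Xᵢ ≤ x} ∈ [-1, 1]` i.i.d.
Fubini turns `E Y` into `∫ k(v) (F(x - h v) - F(x)) dv`, and a second-order Taylor expansion of `F`,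
the first-order term cancelling by symmetry of `k`, gives `E Y = k₂ f'(x) h² / 2 + O(h³)`.
For `h = a n^(-1/5)` the normalized sum therefore has mean `a² k₂ f'(x) n^(1/10) / 2 + O(1) → ±∞`,
while its variance stays below `Var Y ≤ 1`; Chebyshev's inequality bounds the probability of the
band `[-c, c]` by `1 / (|mean| - c)² → 0`.
-/

open MeasureTheory ProbabilityTheory Set Filter

lemma abs_le_mul_abs_sub_pow_succ_of_hasDerivAt {G G' : ℝ → ℝ} {x C : ℝ} {m : ℕ}
    (hG : ∀ s, HasDerivAt G (G' s) s) (hGx : G x = 0)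
    (hG' : ∀ s, |G' s| ≤ C * |s - x| ^ m) (t : ℝ) :
    |G t| ≤ C * |t - x| ^ (m + 1) := by
  have hC : 0 ≤ C := by simpa using (abs_nonneg _).trans (hG' (x + 1))
  have hbound : ∀ s ∈ uIcc x t, ‖G' s‖ ≤ C * |t - x| ^ m := fun s hs => by
    have hsx : |s - x| ≤ |t - x| := by
      rw [← Real.dist_eq, ← Real.dist_eq, dist_comm, dist_comm t]
      exact Real.dist_left_le_of_mem_uIcc hs
    exact (hG' s).trans (by gcongr)
  have := (convex_uIcc x t).norm_image_sub_le_of_norm_hasDerivWithin_le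
    (fun s _ => (hG s).hasDerivWithinAt) hbound left_mem_uIcc right_mem_uIcc
  rw [hGx, sub_zero, Real.norm_eq_abs, Real.norm_eq_abs] at this
  rwa [pow_succ, ← mul_assoc]

lemma abs_taylor_remainder_two_le {F f f' f'' : ℝ → ℝ} {M : ℝ}
    (hF : ∀ y, HasDerivAt F (f y) y) (hf : ∀ y, HasDerivAt f (f' y) y)
    (hf' : ∀ y, HasDerivAt f' (f'' y) y) (hM : ∀ y, |f'' y| ≤ M) (x t : ℝ) :
    |F t - F x - (t - x) * f x - (t - x) ^ 2 / 2 * f' x| ≤ M * |t - x| ^ 3 := by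
  have hf'_sub : ∀ s, |f' s - f' x| ≤ M * |s - x| ^ 1 :=
    abs_le_mul_abs_sub_pow_succ_of_hasDerivAt (m := 0) (fun s => (hf' s).sub_const _)
      (sub_self _) (by simpa using hM)
  have hf_taylor : ∀ s, |f s - f x - (s - x) * f' x| ≤ M * |s - x| ^ 2 := by
    refine abs_le_mul_abs_sub_pow_succ_of_hasDerivAt (G := fun s => f s - f x - (s - x) * f' x)
      (fun s => ?_) (by ring) hf'_sub
    simpa using
      ((hf s).sub_const (f x)).fun_sub (((hasDerivAt_id s).sub_const x).mul_const (f' x))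
  refine abs_le_mul_abs_sub_pow_succ_of_hasDerivAt
    (G := fun s => F s - F x - (s - x) * f x - (s - x) ^ 2 / 2 * f' x) (fun s => ?_) (by ring) hf_taylor t
  refine (((hF s).sub_const (F x)).fun_sub (((hasDerivAt_id s).sub_const x).mul_const (f x))
    |>.fun_sub ((((hasDerivAt_id s).sub_const x).pow 2).div_const 2 |>.mul_const (f' x)))
    |>.congr_deriv ?_
  simp only [id, Nat.cast_ofNat]
  ring

lemma MeasureTheory.Integrable.continuous_mul_of_hasCompactSupport {k φ : ℝ → ℝ} (hk : Integrable k)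
    (hsupp : HasCompactSupport k) (hφ : Continuous φ) : Integrable (fun v => φ v * k v) :=
  (hk.integrableOn.continuousOn_mul hφ.continuousOn hsupp).integrable_of_forall_notMem_eq_zero
    fun v hv => by rw [image_eq_zero_of_notMem_tsupport hv, mul_zero]

lemma integral_mul_eq_zero_of_even {k : ℝ → ℝ} (hk : ∀ v, k (-v) = k v) :
    ∫ v, v * k v = 0 := by
  have := integral_neg_eq_self (fun v => v * k v) volume
  simp only [hk, neg_mul, integral_neg] at this
  linarith

lemma abs_integral_mul_sub_sub_le {f f' f'' F k : ℝ → ℝ} {M : ℝ}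
    (hF : ∀ y, HasDerivAt F (f y) y) (hf : ∀ y, HasDerivAt f (f' y) y)
    (hf' : ∀ y, HasDerivAt f' (f'' y) y) (hM : ∀ y, |f'' y| ≤ M) (hknn : ∀ v, 0 ≤ k v)
    (hksymm : ∀ v, k (-v) = k v) (hkint : Integrable k) (hksupp : HasCompactSupport k)
    (x h : ℝ) :
    |(∫ v, k v * (F (x - h * v) - F x)) - h ^ 2 / 2 * (∫ v, v ^ 2 * k v) * f' x|
      ≤ M * (∫ v, |v| ^ 3 * k v) * |h| ^ 3 := by
  set T : ℝ → ℝ := fun v => F (x - h * v) - F x + h * v * f x - (h * v) ^ 2 / 2 * f' x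
  have hT : ∀ v, ‖k v * T v‖ ≤ M * |h| ^ 3 * (|v| ^ 3 * k v) := fun v => calc
    ‖k v * T v‖ = k v * |F (x - h * v) - F x - (x - h * v - x) * f x
        - (x - h * v - x) ^ 2 / 2 * f' x| := by
      rw [Real.norm_eq_abs, abs_mul, abs_of_nonneg (hknn v)]
      congr 2
      ring
    _ ≤ k v * (M * |x - h * v - x| ^ 3) :=
      mul_le_mul_of_nonneg_left (abs_taylor_remainder_two_le hF hf hf' hM _ _) (hknn v)
    _ = M * |h| ^ 3 * (|v| ^ 3 * k v) := by
      rw [show x - h * v - x = -(h * v) by ring, abs_neg, abs_mul]; ring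
  have hFc : Continuous F := continuous_iff_continuousAt.2 fun y => (hF y).continuousAt
  have hint : ∀ {φ : ℝ → ℝ}, Continuous φ → Integrable (fun v => φ v * k v) :=
    fun hφ => hkint.continuous_mul_of_hasCompactSupport hksupp hφ
  have hkT : Integrable (fun v => k v * T v) := by
    simpa only [mul_comm] using hint (φ := T) (by fun_prop)
  have hsplit : ∫ v, k v * (F (x - h * v) - F x)
      = -(h * f x) * (∫ v, v * k v) + h ^ 2 / 2 * f' x * (∫ v, v ^ 2 * k v)
        + ∫ v, k v * T v := by
    rw [← integral_const_mul, ← integral_const_mul, ← integral_add, ← integral_add]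
    · congr 1; ext v; simp only [T]; ring
    · exact ((hint continuous_id).const_mul _).add ((hint (continuous_pow 2)).const_mul _)
    · exact hkT
    · exact (hint continuous_id).const_mul _
    · exact (hint (continuous_pow 2)).const_mul _
  have hremainder : (∫ v, k v * (F (x - h * v) - F x)) - h ^ 2 / 2 * (∫ v, v ^ 2 * k v) * f' x
      = ∫ v, k v * T v := by
    rw [hsplit, integral_mul_eq_zero_of_even hksymm]; ring
  rw [hremainder, ← Real.norm_eq_abs, mul_right_comm, ← integral_const_mul]
  exact norm_integral_le_of_norm_le ((hint (by fun_prop)).const_mul _) (ae_of_all _ hT)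

section SmoothedCdf

variable {k K : ℝ → ℝ}

noncomputable def smoothingError (K : ℝ → ℝ) (x h y : ℝ) : ℝ :=
  K ((x - y) / h) - if y ≤ x then 1 else 0

lemma monotone_of_integral_Iic (hknn : ∀ v, 0 ≤ k v) (hkint : Integrable k)
    (hK : ∀ u, K u = ∫ v in Iic u, k v) : Monotone K := fun u u' huu' => by
  rw [hK u, hK u']
  exact setIntegral_mono_set hkint.integrableOn (ae_of_all _ hknn)
    (Iic_subset_Iic.2 huu').eventuallyLE

lemma mem_Icc_zero_one_of_integral_Iic (hknn : ∀ v, 0 ≤ k v) (hkint : Integrable k)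
    (hkprob : ∫ v, k v = 1) (hK : ∀ u, K u = ∫ v in Iic u, k v) (u : ℝ) : K u ∈ Icc 0 1 := by
  rw [hK u]
  exact ⟨setIntegral_nonneg measurableSet_Iic fun v _ => hknn v,
    hkprob ▸ setIntegral_le_integral hkint (ae_of_all _ hknn)⟩

lemma integral_mul_ite_le_sub_mul_eq (hK : ∀ u, K u = ∫ v in Iic u, k v) {h : ℝ} (hh : 0 < h)
    (x y : ℝ) :
    ∫ v, k v * (if y ≤ x - h * v then 1 else 0) = K ((x - y) / h) := by
  have hiff : ∀ v, y ≤ x - h * v ↔ v ∈ Iic ((x - y) / h) := fun v => by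
    rw [mem_Iic, le_div_iff₀ hh]
    constructor <;> intro <;> linarith
  have hind :
      (fun v => k v * if y ≤ x - h * v then 1 else 0) = (Iic ((x - y) / h)).indicator k := by
    ext v
    simp only [indicator_apply, ← hiff, mul_ite, mul_one, mul_zero]
  rw [hind, integral_indicator measurableSet_Iic, hK]

lemma integral_ite_sub_ite_mul_eq_sub {f F : ℝ → ℝ} (hfint : Integrable f)
    (hF : ∀ y, HasDerivAt F (f y) y) (b x : ℝ) :
    ∫ y, ((if y ≤ b then 1 else 0) - (if y ≤ x then 1 else 0)) * f y = F b - F x := by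
  have hind : ∀ t, (fun y => (if y ≤ t then 1 else 0) * f y) = (Iic t).indicator f := fun t => by
    ext y
    simp only [indicator_apply, mem_Iic, ite_mul, one_mul, zero_mul]
  simp_rw [sub_mul]
  rw [integral_sub, hind, hind, integral_indicator measurableSet_Iic,
    integral_indicator measurableSet_Iic,
    intervalIntegral.integral_Iic_sub_Iic hfint.integrableOn hfint.integrableOn,
    intervalIntegral.integral_eq_sub_of_hasDerivAt (fun u _ => hF u) hfint.intervalIntegrable]
  all_goals rw [hind]; exact hfint.indicator measurableSet_Iic

lemma integral_smoothingError_mul_eq {f F : ℝ → ℝ} (hfint : Integrable f)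
    (hF : ∀ y, HasDerivAt F (f y) y) (hkint : Integrable k) (hkprob : ∫ v, k v = 1)
    (hK : ∀ u, K u = ∫ v in Iic u, k v) {h : ℝ} (hh : 0 < h) (x : ℝ) :
    ∫ y, smoothingError K x h y * f y = ∫ v, k v * (F (x - h * v) - F x) := by
  set D : ℝ → ℝ → ℝ := fun y v => (if y ≤ x - h * v then 1 else 0) - if y ≤ x then 1 else 0
  have hD : ∀ y, smoothingError K x h y = ∫ v, k v * D y v := fun y => by
    simp_rw [smoothingError, D, mul_sub]
    rw [integral_sub, integral_mul_ite_le_sub_mul_eq hK hh, integral_mul_const, hkprob,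
      one_mul]
    · exact hkint.mul_bdd (c := 1) (Measurable.ite (measurableSet_le measurable_const
        (by fun_prop)) measurable_const measurable_const).aestronglyMeasurable
        (ae_of_all _ fun v => by split_ifs <;> simp)
    · exact hkint.mul_const _
  have hprod : Integrable (Function.uncurry fun y v => k v * D y v * f y)
      ((volume : Measure ℝ).prod volume) := by
    have hDmeas : Measurable (Function.uncurry D) :=
      (Measurable.ite (measurableSet_le measurable_fst (by fun_prop)) measurable_const
        measurable_const).sub
      (Measurable.ite (measurableSet_le measurable_fst measurable_const) measurable_const
        measurable_const)
    have hD1 : ∀ z : ℝ × ℝ, ‖Function.uncurry D z‖ ≤ 1 := fun z => by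
      simp only [Function.uncurry, D]; split_ifs <;> norm_num
    refine ((hfint.mul_prod hkint).mul_bdd hDmeas.aestronglyMeasurable (ae_of_all _ hD1)).congr
      (ae_of_all _ fun z => ?_)
    simp only [Function.uncurry]
    ring
  calc ∫ y, smoothingError K x h y * f y
      = ∫ y, ∫ v, k v * D y v * f y := by simp_rw [hD, integral_mul_const]
    _ = ∫ v, ∫ y, k v * D y v * f y := integral_integral_swap hprod
    _ = ∫ v, k v * (F (x - h * v) - F x) := by
      simp_rw [mul_assoc, integral_const_mul, D, integral_ite_sub_ite_mul_eq_sub hfint hF]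

lemma measurable_smoothingError (hK : Measurable K) (x h : ℝ) :
    Measurable (smoothingError K x h) :=
  (hK.comp (by fun_prop)).sub
    (Measurable.ite (measurableSet_le measurable_id measurable_const) measurable_const
      measurable_const)

lemma smoothingError_mem_Icc (hK : ∀ u, K u ∈ Icc 0 1) (x h y : ℝ) :
    smoothingError K x h y ∈ Icc (-1) 1 := by
  have := hK ((x - y) / h)
  simp only [smoothingError, mem_Icc] at this ⊢
  split_ifs <;> constructor <;> linarith

lemma abs_integral_smoothingError_mul_sub_le {f f' f'' F : ℝ → ℝ} {M : ℝ}
    (hfint : Integrable f) (hF : ∀ y, HasDerivAt F (f y) y) (hf : ∀ y, HasDerivAt f (f' y) y)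
    (hf' : ∀ y, HasDerivAt f' (f'' y) y) (hM : ∀ y, |f'' y| ≤ M) (hknn : ∀ v, 0 ≤ k v)
    (hksymm : ∀ v, k (-v) = k v) (hkint : Integrable k) (hkprob : ∫ v, k v = 1)
    (hksupp : HasCompactSupport k) (hK : ∀ u, K u = ∫ v in Iic u, k v) {h : ℝ} (hh : 0 < h)
    (x : ℝ) :
    |(∫ y, smoothingError K x h y * f y) - (∫ v, v ^ 2 * k v) * f' x / 2 * h ^ 2|
      ≤ M * (∫ v, |v| ^ 3 * k v) * h ^ 3 := by
  have := abs_integral_mul_sub_sub_le hF hf hf' hM hknn hksymm hkint hksupp x h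
  rw [← integral_smoothingError_mul_eq hfint hF hkint hkprob hK hh, abs_of_pos hh] at this
  convert this using 3
  ring

end SmoothedCdf

section Sampling

variable {Ω : Type*} [MeasurableSpace Ω] {μ : Measure Ω}

lemma integral_comp_eq_integral_mul_density {X : Ω → ℝ} {f : ℝ → ℝ} (hX : Measurable X)
    (hfnn : ∀ y, 0 ≤ f y) (hf : AEMeasurable f)
    (hlaw : μ.map X = volume.withDensity (fun y => ENNReal.ofReal (f y)))
    {g : ℝ → ℝ} (hg : Measurable g) : ∫ ω, g (X ω) ∂μ = ∫ y, g y * f y := by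
  rw [← integral_map hX.aemeasurable hg.aestronglyMeasurable, hlaw,
    integral_withDensity_eq_integral_toReal_smul₀ hf.ennreal_ofReal
      (ae_of_all _ fun _ => ENNReal.ofReal_lt_top)]
  simp only [ENNReal.toReal_ofReal (hfnn _), smul_eq_mul, mul_comm]

lemma measure_abs_le_le_variance_div_sq [IsFiniteMeasure μ] {Z : Ω → ℝ} (hZ : MemLp Z 2 μ)
    {c : ℝ} (hc : c < |μ[Z]|) :
    μ {ω | |Z ω| ≤ c} ≤ ENNReal.ofReal (variance Z μ / (|μ[Z]| - c) ^ 2) := by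
  refine (measure_mono fun ω (hω : |Z ω| ≤ c) => ?_).trans
    (meas_ge_le_variance_div_sq hZ (sub_pos.2 hc))
  have := abs_sub_abs_le_abs_sub (μ[Z]) (Z ω)
  rw [abs_sub_comm] at this
  show |μ[Z]| - c ≤ |Z ω - μ[Z]|
  linarith

lemma measure_abs_sqrt_div_mul_sum_le_le [IsProbabilityMeasure μ] {Y : ℕ → Ω → ℝ}
    (hY : ∀ i, MemLp (Y i) 2 μ) (hindep : Pairwise fun i j => IndepFun (Y i) (Y j) μ)
    {m V : ℝ} (hmean : ∀ i, μ[Y i] = m) (hvar : ∀ i, variance (Y i) μ ≤ V) {n : ℕ} (hn : 0 < n)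
    {c : ℝ} (hc : c < |√n * m|) :
    μ {ω | |√n / n * ∑ i ∈ Finset.range n, Y i ω| ≤ c}
      ≤ ENNReal.ofReal (V / (|√n * m| - c) ^ 2) := by
  set S : Ω → ℝ := ∑ i ∈ Finset.range n, Y i
  have hS : ∀ ω, ∑ i ∈ Finset.range n, Y i ω = S ω := fun ω => (Finset.sum_apply ..).symm
  have hn' : (n : ℝ) ≠ 0 := by positivity
  have hmeanZ : μ[(√n / n) • S] = √n * m := by
    rw [show (√n / n) • S = fun ω => (√n / n) • S ω from rfl, integral_smul]
    simp only [← hS]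
    rw [integral_finsetSum _ fun i _ => (hY i).integrable one_le_two]
    simp only [hmean, Finset.sum_const, Finset.card_range, nsmul_eq_mul, smul_eq_mul]
    field_simp
  have hvarZ : variance ((√n / n) • S) μ ≤ V := by
    rw [variance_smul, IndepFun.variance_sum (fun i _ => hY i) fun i _ j _ hij => hindep hij]
    calc (√n / n) ^ 2 * ∑ i ∈ Finset.range n, variance (Y i) μ
        ≤ (√n / n) ^ 2 * ∑ _i ∈ Finset.range n, V := by gcongr with i; exact hvar i
      _ = V := by
        rw [Finset.sum_const, Finset.card_range, nsmul_eq_mul, div_pow, Real.sq_sqrt n.cast_nonneg]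
        field_simp
  simp only [hS]
  rw [← hmeanZ] at hc ⊢
  refine (measure_abs_le_le_variance_div_sq ((memLp_finsetSum' _ fun i _ => hY i).const_smul _)
    hc).trans (ENNReal.ofReal_le_ofReal ?_)
  gcongr

lemma toReal_measure_abs_sqrt_div_mul_sum_comp_le [IsProbabilityMeasure μ] {X : ℕ → Ω → ℝ}
    (hXmeas : ∀ i, Measurable (X i)) (hindep : iIndepFun X μ) {f : ℝ → ℝ} (hfnn : ∀ y, 0 ≤ f y)
    (hf : AEMeasurable f)
    (hlaw : ∀ i, μ.map (X i) = volume.withDensity (fun y => ENNReal.ofReal (f y)))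
    {g : ℝ → ℝ} (hg : Measurable g) (hg1 : ∀ y, g y ∈ Icc (-1) 1) {n : ℕ} (hn : 0 < n) {c : ℝ}
    (hc : c < |√n * ∫ y, g y * f y|) :
    (μ {ω | |√n / n * ∑ i ∈ Finset.range n, g (X i ω)| ≤ c}).toReal
      ≤ 1 / (|√n * ∫ y, g y * f y| - c) ^ 2 := by
  have hY : ∀ i, MemLp (fun ω => g (X i ω)) 2 μ := fun i =>
    MemLp.of_bound (hg.comp (hXmeas i)).aestronglyMeasurable 1
      (ae_of_all _ fun ω => abs_le.2 (hg1 _))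
  have hvar : ∀ i, variance (fun ω => g (X i ω)) μ ≤ 1 := fun i => by
    simpa using variance_le_sq_of_bounded (ae_of_all _ fun ω => hg1 (X i ω))
      (hg.comp (hXmeas i)).aemeasurable
  refine ENNReal.toReal_le_of_le_ofReal (by positivity) ?_
  exact measure_abs_sqrt_div_mul_sum_le_le hY
    (fun i j hij => (hindep.comp (fun _ => g) fun _ => hg).indepFun hij)
    (fun i => integral_comp_eq_integral_mul_density (hXmeas i) hfnn hf (hlaw i) hg) hvar hn hc

end Sampling

lemma sqrt_mul_rpow_neg_one_fifth_pow {n : ℝ} (hn : 0 < n) (j : ℕ) :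
    √n * (n ^ (-(1 / 5 : ℝ))) ^ j = n ^ ((1 / 2 : ℝ) - j / 5) := by
  rw [Real.sqrt_eq_rpow, ← Real.rpow_natCast, ← Real.rpow_mul hn.le, ← Real.rpow_add hn]
  ring_nf

lemma tendsto_abs_sqrt_mul_atTop_of_bias {m h : ℕ → ℝ} {a b C : ℝ} (ha : 0 < a) (hb : b ≠ 0)
    (hh : ∀ n : ℕ, h n = a * (n : ℝ) ^ (-(1 / 5 : ℝ)))
    (hm : ∀ᶠ n in atTop, |m n - b * h n ^ 2| ≤ C * h n ^ 3) :
    Tendsto (fun n : ℕ => |√n * m n|) atTop atTop := by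
  have hC : ∀ᶠ n : ℕ in atTop, |b| * a ^ 2 * (n : ℝ) ^ (1 / 10 : ℝ) - |C| * a ^ 3 ≤ |√n * m n| := by
    filter_upwards [hm, eventually_gt_atTop 0] with n hmn hn
    have hn' : (0 : ℝ) < n := Nat.cast_pos.2 hn
    have hsq : √n * h n ^ 2 = a ^ 2 * (n : ℝ) ^ (1 / 10 : ℝ) := by
      rw [hh, mul_pow, mul_left_comm, sqrt_mul_rpow_neg_one_fifth_pow hn']; norm_num
    have hcube : √n * h n ^ 3 ≤ a ^ 3 := by
      rw [hh, mul_pow, mul_left_comm, sqrt_mul_rpow_neg_one_fifth_pow hn']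
      exact mul_le_of_le_one_right (by positivity)
        (Real.rpow_le_one_of_one_le_of_nonpos (by exact_mod_cast hn) (by norm_num))
    have hdev : |√n * m n - b * (√n * h n ^ 2)| ≤ |C| * a ^ 3 := calc
      |√n * m n - b * (√n * h n ^ 2)| = √n * |m n - b * h n ^ 2| := by
        rw [show √n * m n - b * (√n * h n ^ 2) = √n * (m n - b * h n ^ 2) by ring, abs_mul,
          abs_of_nonneg (Real.sqrt_nonneg _)]
      _ ≤ √n * (|C| * h n ^ 3) := by
        gcongr
        exact hmn.trans (mul_le_mul_of_nonneg_right (le_abs_self C) (by rw [hh]; positivity))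
      _ ≤ |C| * a ^ 3 := by rw [mul_left_comm]; gcongr
    rw [hsq, abs_sub_comm] at hdev
    have := abs_sub_abs_le_abs_sub (b * (a ^ 2 * (n : ℝ) ^ (1 / 10 : ℝ))) (√n * m n)
    rw [abs_mul b, abs_of_nonneg (by positivity : (0 : ℝ) ≤ a ^ 2 * (n : ℝ) ^ (1 / 10 : ℝ))] at this
    linarith
  refine tendsto_atTop_mono' _ hC (tendsto_atTop_add_const_right _ _ ?_)
  exact ((tendsto_rpow_atTop (by norm_num)).comp tendsto_natCast_atTop_atTop).const_mul_atTop
    (by positivity)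

theorem smoothed_cdf_escapes_band_optimal_bandwidth_general
    {Ω : Type*} [MeasurableSpace Ω] (μ : Measure Ω) [IsProbabilityMeasure μ]
    (X : ℕ → Ω → ℝ) (hXmeas : ∀ i, Measurable (X i))
    (hindep : iIndepFun X μ)
    (f f' f'' F : ℝ → ℝ)
    (hfnn : ∀ y, 0 ≤ f y)
    (hfint : Integrable f)
    (hlaw : ∀ i, μ.map (X i) = volume.withDensity (fun y => ENNReal.ofReal (f y)))
    (hF : ∀ y, HasDerivAt F (f y) y)
    (hf : ∀ y, HasDerivAt f (f' y) y)
    (hf' : ∀ y, HasDerivAt f' (f'' y) y)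
    (hf''bdd : ∃ M, ∀ y, |f'' y| ≤ M)
    (x : ℝ) (hf'x : f' x ≠ 0)
    (k K : ℝ → ℝ)
    (hknn : ∀ u, 0 ≤ k u)
    (hksymm : ∀ u, k (-u) = k u)
    (hkint : Integrable k)
    (hkprob : ∫ v, k v = 1)
    (hksupp : HasCompactSupport k)
    (hK : ∀ u, K u = ∫ v in Iic u, k v)
    (hk₂ : 0 < ∫ v, v ^ 2 * k v)
    (a : ℝ) (ha : 0 < a)
    (h : ℕ → ℝ) (hh : ∀ n : ℕ, h n = a * (n : ℝ) ^ (-(1 / 5 : ℝ)))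
    (c : ℝ) :
    Tendsto (fun n : ℕ =>
        (μ {ω | |Real.sqrt n *
            ((1 / n : ℝ) * (∑ i ∈ Finset.range n, K ((x - X i ω) / h n))
              - (1 / n : ℝ) * (∑ i ∈ Finset.range n,
                  (if X i ω ≤ x then (1 : ℝ) else 0)))| ≤ c}).toReal)
      atTop (nhds 0) := by
  obtain ⟨M, hM⟩ := hf''bdd
  set m : ℕ → ℝ := fun n => ∫ y, smoothingError K x (h n) y * f y
  have hbias : ∀ᶠ n in atTop, |m n - (∫ v, v ^ 2 * k v) * f' x / 2 * h n ^ 2|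
      ≤ M * (∫ v, |v| ^ 3 * k v) * h n ^ 3 := by
    filter_upwards [eventually_gt_atTop 0] with n hn
    exact abs_integral_smoothingError_mul_sub_le hfint hF hf hf' hM hknn hksymm hkint hkprob
      hksupp hK (by rw [hh]; positivity) x
  have hmean := tendsto_abs_sqrt_mul_atTop_of_bias ha
    (div_ne_zero (mul_ne_zero hk₂.ne' hf'x) two_ne_zero) hh hbias
  have hprob : ∀ᶠ n : ℕ in atTop,
      (μ {ω | |√n / n * ∑ i ∈ Finset.range n, smoothingError K x (h n) (X i ω)| ≤ c}).toReal
        ≤ 1 / (|√n * m n| - c) ^ 2 := by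
    filter_upwards [hmean.eventually_gt_atTop c, eventually_gt_atTop 0] with n hc hn
    exact toReal_measure_abs_sqrt_div_mul_sum_comp_le hXmeas hindep hfnn hfint.aemeasurable hlaw
      (measurable_smoothingError (monotone_of_integral_Iic hknn hkint hK).measurable x (h n))
      (smoothingError_mem_Icc (mem_Icc_zero_one_of_integral_Iic hknn hkint hkprob hK) x (h n)) hn hc
  have hsum : ∀ (n : ℕ) ω, √n * ((1 / n : ℝ) * (∑ i ∈ Finset.range n, K ((x - X i ω) / h n))
      - (1 / n : ℝ) * (∑ i ∈ Finset.range n, (if X i ω ≤ x then (1 : ℝ) else 0)))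
      = √n / n * ∑ i ∈ Finset.range n, smoothingError K x (h n) (X i ω) := fun n ω => by
    simp only [smoothingError, Finset.sum_sub_distrib]; ring
  simp only [hsum]
  refine tendsto_of_tendsto_of_tendsto_of_le_of_le' tendsto_const_nhds ?_
    (Eventually.of_forall fun n => ENNReal.toReal_nonneg) hprob
  simp only [one_div, sub_eq_add_neg]
  exact ((tendsto_pow_atTop two_ne_zero).comp
    (tendsto_atTop_add_const_right _ (-c) hmean)).inv_tendsto_atTop

theorem smoothed_cdf_escapes_band_optimal_bandwidth
    {Ω : Type*} [MeasurableSpace Ω] (μ : Measure Ω) [IsProbabilityMeasure μ]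
    (X : ℕ → Ω → ℝ) (hXmeas : ∀ i, Measurable (X i))
    (hindep : iIndepFun X μ)
    (f f' f'' F : ℝ → ℝ)
    (hfnn : ∀ y, 0 ≤ f y)
    (hfint : Integrable f)
    (hfprob : ∫ y, f y = 1)
    (hlaw : ∀ i, μ.map (X i) = volume.withDensity (fun y => ENNReal.ofReal (f y)))
    (hF : ∀ y, HasDerivAt F (f y) y)
    (hf : ∀ y, HasDerivAt f (f' y) y)
    (hf' : ∀ y, HasDerivAt f' (f'' y) y)
    (hf''cont : Continuous f'')
    (hf''bdd : ∃ M, ∀ y, |f'' y| ≤ M)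
    (x : ℝ) (hfx : 0 < f x) (hf'x : f' x ≠ 0)
    (k K : ℝ → ℝ)
    (hknn : ∀ u, 0 ≤ k u)
    (hksymm : ∀ u, k (-u) = k u)
    (hkint : Integrable k)
    (hkprob : ∫ v, k v = 1)
    (hksupp : HasCompactSupport k)
    (hK : ∀ u, K u = ∫ v in Iic u, k v)
    (hk₂ : 0 < ∫ v, v ^ 2 * k v)
    (a : ℝ) (ha : 0 < a)
    (h : ℕ → ℝ) (hh : ∀ n : ℕ, h n = a * (n : ℝ) ^ (-(1 / 5 : ℝ)))
    (c : ℝ) (hc : 0 < c) :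
    Tendsto (fun n : ℕ =>
        (μ {ω | |Real.sqrt n *
            ((1 / n : ℝ) * (∑ i ∈ Finset.range n, K ((x - X i ω) / h n))
              - (1 / n : ℝ) * (∑ i ∈ Finset.range n,
                  (if X i ω ≤ x then (1 : ℝ) else 0)))| ≤ c}).toReal)
      atTop (nhds 0) :=
  smoothed_cdf_escapes_band_optimal_bandwidth_general μ X hXmeas hindep f f' f'' F hfnn hfint hlaw
    hF hf hf' hf''bdd x hf'x k K hknn hksymm hkint hkprob hksupp hK hk₂ a ha h hh c
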